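/- arXiv:2112.10173 — 2 statements merged into one kernel-verified Lean document; each statement's English description precedes it below -/
import Mathlib

section
/- Let λ be a prefix-free code on alphabet A with distribution p and maximal codeword length l, and let π_λ be the randomized-padding distribution on {0,1}^l. Then the min-entropy of π_λ equals h_min(π_λ) = l − max_i (|λ(a_i)| − log₂(1/p(a_i))). -/
open Real Finset

/-- A binary code is prefix-free if it is injective and no codeword is a prefix of
another codeword. -/
def PrefixFree {A : Type*} (lam : A → List Bool) : Prop :=
  Function.Injective lam ∧ ∀ a b : A, a ≠ b → ¬ (lam a <+: lam b)

/-- The randomized-padding distribution `π_λ` on `{0,1}^l`. -/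
noncomputable def piDist {L : ℕ} (p : Fin L → ℝ) (lam : Fin L → List Bool) (l : ℕ)
    (y : Fin l → Bool) : ℝ :=
  ∑ i, if lam i <+: List.ofFn y then p i * (1 / 2) ^ (l - (lam i).length) else 0

/-- Min-entropy of a distribution on a finite nonempty type:
`h_min(π) = -log₂ max_y π(y)`. -/
noncomputable def minEntropy {S : Type*} [Fintype S] [Nonempty S] (pi : S → ℝ) : ℝ :=
  - Real.logb 2 (Finset.univ.sup' Finset.univ_nonempty pi)

/-!
A word `y ∈ {0,1}^l` has at most one codeword as a prefix, so `π_λ(y)` is either `0` or the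
single weight `p(a_i) 2^{-(l - |λ(a_i)|)} = 2^{|λ(a_i)| - log₂(1/p(a_i)) - l}`; and every
such weight is attained, by padding `λ(a_i)` to length `l`. Hence `max_y π_λ(y)` is the
largest of these powers of two, and its `-log₂` is `l - max_i (|λ(a_i)| - log₂(1/p(a_i)))`.
-/

theorem PrefixFree.eq_of_prefix_of_prefix {A : Type*} {lam : A → List Bool} (hpf : PrefixFree lam)
    {a b : A} {s : List Bool} (ha : lam a <+: s) (hb : lam b <+: s) : a = b := by
  by_contra hab
  rcases List.prefix_or_prefix_of_prefix ha hb with h | h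
  · exact hpf.2 a b hab h
  · exact hpf.2 b a (Ne.symm hab) h

theorem List.exists_prefix_ofFn {α : Type*} [Inhabited α] (w : List α) {l : ℕ}
    (hw : w.length ≤ l) : ∃ y : Fin l → α, w <+: List.ofFn y := by
  obtain ⟨v, rfl, hwv⟩ : ∃ v : List α, v.length = l ∧ w <+: v :=
    ⟨w ++ List.replicate (l - w.length) default, by simp; omega, List.prefix_append _ _⟩
  exact ⟨fun k => v[(k : ℕ)], by rwa [List.ofFn_getElem]⟩

section piDist

variable {L : ℕ} {p : Fin L → ℝ} {lam : Fin L → List Bool} {l : ℕ}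

theorem piDist_eq_of_prefix (hpf : PrefixFree lam) {y : Fin l → Bool} {i : Fin L}
    (hi : lam i <+: List.ofFn y) : piDist p lam l y = p i * (1 / 2) ^ (l - (lam i).length) := by
  rw [piDist, Finset.sum_eq_single_of_mem i (mem_univ i), if_pos hi]
  intro j _ hji
  exact if_neg fun hj => hji (hpf.eq_of_prefix_of_prefix hj hi)

theorem piDist_eq_zero {y : Fin l → Bool} (hy : ∀ i, ¬ lam i <+: List.ofFn y) :
    piDist p lam l y = 0 :=
  Finset.sum_eq_zero fun i _ => if_neg (hy i)

theorem sup'_piDist (hne : (univ : Finset (Fin L)).Nonempty) (hp : ∀ i, 0 ≤ p i)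
    (hpf : PrefixFree lam) (hlen : ∀ i, (lam i).length ≤ l) :
    univ.sup' univ_nonempty (piDist p lam l) =
      univ.sup' hne (fun i => p i * (1 / 2) ^ (l - (lam i).length)) := by
  apply le_antisymm
  · refine Finset.sup'_le _ _ fun y _ => ?_
    by_cases hy : ∃ i, lam i <+: List.ofFn y
    · obtain ⟨i, hi⟩ := hy
      rw [piDist_eq_of_prefix hpf hi]
      exact Finset.le_sup' (fun i => p i * (1 / 2) ^ (l - (lam i).length)) (mem_univ i)
    · obtain ⟨i, -⟩ := hne
      rw [piDist_eq_zero (not_exists.mp hy)]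
      exact (mul_nonneg (hp i) (pow_nonneg (by norm_num) _)).trans
        (Finset.le_sup' (fun i => p i * (1 / 2) ^ (l - (lam i).length)) (mem_univ i))
  · refine Finset.sup'_le _ _ fun i _ => ?_
    obtain ⟨y, hy⟩ := (lam i).exists_prefix_ofFn (hlen i)
    rw [← piDist_eq_of_prefix hpf hy]
    exact Finset.le_sup' (piDist p lam l) (mem_univ y)

end piDist

theorem mul_half_pow_eq_two_rpow {x : ℝ} (hx : 0 < x) {n l : ℕ} (hnl : n ≤ l) :
    x * (1 / 2) ^ (l - n) = (2 : ℝ) ^ ((n : ℝ) - Real.logb 2 (1 / x) - l) := by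
  have hx' : (2 : ℝ) ^ (-Real.logb 2 (1 / x)) = x := by
    rw [Real.rpow_neg zero_le_two, Real.rpow_logb two_pos (by norm_num) (by positivity),
      one_div, inv_inv]
  have hpow : ((1 : ℝ) / 2) ^ (l - n) = (2 : ℝ) ^ ((n : ℝ) - l) := by
    rw [← neg_sub, ← Nat.cast_sub hnl, Real.rpow_neg zero_le_two, Real.rpow_natCast, one_div,
      inv_pow]
  conv_lhs => rw [hpow, ← hx', ← Real.rpow_add two_pos]
  ring_nf

theorem Real.logb_sup'_rpow_sub {ι : Type*} {s : Finset ι} (hs : s.Nonempty) {b : ℝ}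
    (hb : 1 < b) (g : ι → ℝ) (c : ℝ) :
    Real.logb b (s.sup' hs fun i => b ^ (g i - c)) = s.sup' hs g - c := by
  have hmono : Monotone fun x : ℝ => b ^ (x - c) := fun x y hxy =>
    Real.rpow_le_rpow_of_exponent_le hb.le (by linarith)
  have hsup : (s.sup' hs fun i => b ^ (g i - c)) = b ^ (s.sup' hs g - c) :=
    (Finset.apply_sup'_eq_sup'_comp hs (fun x : ℝ => b ^ (x - c)) (f := g)
      fun x y => hmono.map_sup x y).symm
  rw [hsup, Real.logb_rpow (zero_lt_one.trans hb) hb.ne']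

theorem piDist_min_entropy_general {L : ℕ} (hL : 0 < L) (p : Fin L → ℝ)
    (lam : Fin L → List Bool)
    (hpos : ∀ i, 0 < p i)
    (hpf : PrefixFree lam) (l : ℕ)
    (hlen : ∀ i, (lam i).length ≤ l) :
    minEntropy (piDist p lam l) =
      (l : ℝ) - Finset.univ.sup' ⟨⟨0, hL⟩, Finset.mem_univ _⟩
        (fun i : Fin L => ((lam i).length : ℝ) - Real.logb 2 (1 / p i)) := by
  have hne : (univ : Finset (Fin L)).Nonempty := ⟨⟨0, hL⟩, mem_univ _⟩
  rw [minEntropy, sup'_piDist hne (fun i => (hpos i).le) hpf hlen,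
    Finset.sup'_congr _ rfl fun i _ => mul_half_pow_eq_two_rpow (hpos i) (hlen i),
    Real.logb_sup'_rpow_sub hne one_lt_two]
  ring

/-- the min-entropy of the randomized-padding distribution equals
`h_min(π_λ) = l − max_i (|λ(a_i)| − log₂(1/p(a_i)))`. -/
theorem piDist_min_entropy {L : ℕ} (hL : 0 < L) (p : Fin L → ℝ)
    (lam : Fin L → List Bool)
    (hpos : ∀ i, 0 < p i) (hsum : ∑ i, p i = 1)
    (hpf : PrefixFree lam) (l : ℕ)
    (hlen : ∀ i, (lam i).length ≤ l)
    (hmax : ∃ i, (lam i).length = l) :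
    minEntropy (piDist p lam l) =
      (l : ℝ) - Finset.univ.sup' ⟨⟨0, hL⟩, Finset.mem_univ _⟩
        (fun i : Fin L => ((lam i).length : ℝ) - Real.logb 2 (1 / p i)) :=
  piDist_min_entropy_general hL p lam hpos hpf l hlen
end

section
/- Let λ be a prefix-free code with maximal codeword length l on alphabet A with distribution p, and let π_λ be the randomized-padding distribution on {0,1}^l. If for constants c we have |λ(a_i)| − log₂(1/p(a_i)) ≤ c for all i, then l − h_min(π_λ) ≤ c; consequently the Dodis–Smith key length n' − h_min + 2log₂(1/ε) + 2 with n' = l is at most c + 2log₂(1/ε) + 2, independent of the message distribution p. -/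
open Real Finset

lemma term_le {L : ℕ} (p : Fin L → ℝ) (lam : Fin L → List Bool) (l : ℕ)
    (hpos : ∀ i, 0 < p i) (hlen : ∀ i, (lam i).length ≤ l) (c : ℝ)
    (hc : ∀ i, ((lam i).length : ℝ) - Real.logb 2 (1 / p i) ≤ c) (i : Fin L) :
    p i * (1 / 2 : ℝ) ^ (l - (lam i).length) ≤ (2 : ℝ) ^ (c - l) := by
  have hp := hpos i
  have h1 : Real.logb 2 (1 / p i) = - Real.logb 2 (p i) := by
    rw [one_div, Real.logb_inv]
  have h2 : ((lam i).length : ℝ) + Real.logb 2 (p i) ≤ c := by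
    have := hc i; rw [h1] at this; linarith
  have key : p i * (1 / 2 : ℝ) ^ (l - (lam i).length)
      = (2 : ℝ) ^ (Real.logb 2 (p i) + ((lam i).length : ℝ) - l) := by
    have hplam : (p i) = (2 : ℝ) ^ (Real.logb 2 (p i)) :=
      (Real.rpow_logb (by norm_num) (by norm_num) hp).symm
    have hpow : (1 / 2 : ℝ) ^ (l - (lam i).length)
        = (2 : ℝ) ^ (((lam i).length : ℝ) - l) := by
      rw [div_pow, one_pow, ← Real.rpow_natCast (2 : ℝ) (l - (lam i).length), one_div,
        ← Real.rpow_neg (by norm_num : (0:ℝ) ≤ 2), Nat.cast_sub (hlen i)]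
      congr 1
      ring
    rw [hpow]
    nth_rewrite 1 [hplam]
    rw [← Real.rpow_add (by norm_num)]
    ring_nf
  rw [key]
  exact Real.rpow_le_rpow_of_exponent_le (by norm_num) (by linarith)

/-- if `|λ(a_i)| − log₂(1/p(a_i)) ≤ c` for all `i`, then
`l − h_min(π_λ) ≤ c`; consequently the Dodis–Smith key length
`l − h_min + 2·log₂(1/ε) + 2` is at most `c + 2·log₂(1/ε) + 2`, independently of the
message distribution `p`. -/
theorem short_key_from_padded_code {L : ℕ} (hL : 0 < L) (p : Fin L → ℝ)
    (lam : Fin L → List Bool)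
    (hpos : ∀ i, 0 < p i) (hsum : ∑ i, p i = 1)
    (hpf : PrefixFree lam) (l : ℕ)
    (hlen : ∀ i, (lam i).length ≤ l)
    (hmax : ∃ i, (lam i).length = l)
    (c : ℝ)
    (hc : ∀ i, ((lam i).length : ℝ) - Real.logb 2 (1 / p i) ≤ c)
    (ε : ℝ) (hε : 0 < ε) :
    (l : ℝ) - minEntropy (piDist p lam l) ≤ c ∧
      (l : ℝ) - minEntropy (piDist p lam l) + 2 * Real.logb 2 (1 / ε) + 2 ≤
        c + 2 * Real.logb 2 (1 / ε) + 2 := by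
  have hB : (0:ℝ) < (2:ℝ) ^ (c - l) := Real.rpow_pos_of_pos (by norm_num) _
  -- each value of piDist is ≤ 2^(c-l)
  have hle : ∀ y : Fin l → Bool, piDist p lam l y ≤ (2:ℝ) ^ (c - l) := by
    intro y
    unfold piDist
    by_cases hex : ∃ i, lam i <+: List.ofFn y
    · obtain ⟨i, hi⟩ := hex
      have hsum' : (∑ j, if lam j <+: List.ofFn y then p j * (1 / 2:ℝ) ^ (l - (lam j).length) else 0)
          = p i * (1/2:ℝ) ^ (l - (lam i).length) := by
        rw [Finset.sum_eq_single i]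
        · simp [hi]
        · intro j _ hji
          have : ¬ (lam j <+: List.ofFn y) := by
            intro hj
            rcases List.prefix_or_prefix_of_prefix hj hi with h | h
            · exact hpf.2 j i hji h
            · exact hpf.2 i j (Ne.symm hji) h
          simp [this]
        · intro h; exact absurd (Finset.mem_univ i) h
      rw [hsum']
      exact term_le p lam l hpos hlen c hc i
    · push_neg at hex
      have : (∑ j, if lam j <+: List.ofFn y then p j * (1/2:ℝ) ^ (l - (lam j).length) else 0) = 0 := by
        apply Finset.sum_eq_zero
        intro j _; simp [hex j]
      rw [this]; exact le_of_lt hB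
  -- the sup is positive
  obtain ⟨i0, hi0⟩ := hmax
  set y0 : Fin l → Bool := fun k => (lam i0).getD k false with hy0
  have hpref : lam i0 <+: List.ofFn y0 := by
    have hlenof : (List.ofFn y0).length = l := by simp
    refine List.prefix_iff_eq_take.mpr ?_
    apply List.ext_getElem
    · simp [hi0]
    · intro n h1 h2
      simp only [List.getElem_take, List.getElem_ofFn]
      simp only [hy0]
      rw [List.getD_eq_getElem _ _ (by omega)]
  have hpiy0 : 0 < piDist p lam l y0 := by
    unfold piDist
    apply Finset.sum_pos'
    · intro j _
      by_cases h : lam j <+: List.ofFn y0 <;> simp [h]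
      exact (hpos j).le
    · exact ⟨i0, Finset.mem_univ i0, by rw [if_pos hpref]; exact mul_pos (hpos i0) (by positivity)⟩
  have hsup_pos : 0 < Finset.univ.sup' Finset.univ_nonempty (piDist p lam l) :=
    lt_of_lt_of_le hpiy0 (Finset.le_sup' _ (Finset.mem_univ y0))
  have hsup_le : Finset.univ.sup' Finset.univ_nonempty (piDist p lam l) ≤ (2:ℝ) ^ (c - l) :=
    Finset.sup'_le _ _ fun y _ => hle y
  have hlog : Real.logb 2 (Finset.univ.sup' Finset.univ_nonempty (piDist p lam l)) ≤ c - l := by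
    have := Real.logb_le_logb_of_le (by norm_num : (1:ℝ) < 2) hsup_pos hsup_le
    rwa [Real.logb_rpow (by norm_num) (by norm_num)] at this
  have h1 : (l : ℝ) - minEntropy (piDist p lam l) ≤ c := by
    unfold minEntropy; linarith
  exact ⟨h1, by linarith⟩
end
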